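/- Let N > 1, κ ∈ {−1, 0, 1}, K = κ(N−1), and D > 0, with D < π in the case κ = 1. For a ∈ (0,D) let m_a = Vol_{K,N}(D)·h^a_{K,N,D}·𝓛¹ restricted to [0,D]. Then for every ε > 0 there exists ā > 0, depending only on N, K, D, ε, such that for every a ∈ (0, ā) and every r ∈ (0, a]: |m_a([0,r]) / (N ω_N a^{N−1} r) − 1| ≤ ε; i.e. m_a([0,r]) = N ω_N a^{N−1} r (1 + o(1)). -/

import Mathlib

open MeasureTheory Filter Set

/-- The function `s_κ`. -/
noncomputable def sK (κ θ : ℝ) : ℝ :=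
  if 0 < κ then Real.sin (Real.sqrt κ * θ) / Real.sqrt κ
  else if κ = 0 then θ
  else Real.sinh (Real.sqrt (-κ) * θ) / Real.sqrt (-κ)

/-- `k_D = ∫₀^D s_κ(t)^(N-1) dt`. -/
noncomputable def kD (κ N D : ℝ) : ℝ := ∫ t in (0:ℝ)..D, sK κ t ^ (N - 1)

/-- The function `f_{K,N,D}` (with `K = κ(N-1)`). -/
noncomputable def fKND (κ N D x : ℝ) : ℝ :=
  ((∫ y in (0:ℝ)..x, (sK κ (D - y) / sK κ (D - x)) ^ (N - 1)) +
    ∫ y in x..D, (sK κ y / sK κ x) ^ (N - 1))⁻¹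

/-- The model density `h^a_{K,N,D}` (with `K = κ(N-1)`). -/
noncomputable def hKND (κ N D a x : ℝ) : ℝ :=
  if x ≤ a then fKND κ N D a * (sK κ (D - x) / sK κ (D - a)) ^ (N - 1)
  else fKND κ N D a * (sK κ x / sK κ a) ^ (N - 1)

/-- The volume map `v_{K,N,D}(a) = ∫₀^a h^a_{K,N,D}`. -/
noncomputable def vKND (κ N D a : ℝ) : ℝ := ∫ x in (0:ℝ)..a, hKND κ N D a x

/-- `ω_N = π^(N/2)/Γ(N/2+1)`. -/
noncomputable def omegaN (N : ℝ) : ℝ := Real.pi ^ (N / 2) / Real.Gamma (N / 2 + 1)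

/-- `Vol_{K,N}(r) = N ω_N ∫₀^r s_κ(t)^(N-1) dt` (with `K = κ(N-1)`). -/
noncomputable def VolKN (κ N r : ℝ) : ℝ := N * omegaN N * ∫ t in (0:ℝ)..r, sK κ t ^ (N - 1)

/-- The coefficient `σ^{(s)}_{K,N-1}(θ)`, valued in `[0,∞]`. -/
noncomputable def sigmaE (K N s θ : ℝ) : ENNReal :=
  if (N - 1) * Real.pi ^ 2 ≤ K * θ ^ 2 then ⊤
  else ENNReal.ofReal (sK (K / (N - 1)) (s * θ) / sK (K / (N - 1)) θ)

/-- A nonnegative continuous function `h` on the interval `I` is an `MCP(K,N)` density. -/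
def IsMCPDensity (K N : ℝ) (I : Set ℝ) (h : ℝ → ℝ) : Prop :=
  ContinuousOn h I ∧ (∀ x ∈ I, 0 ≤ h x) ∧
    ∀ x₀ ∈ I, ∀ x₁ ∈ I, ∀ t ∈ Set.Icc (0:ℝ) 1,
      sigmaE K N (1 - t) |x₁ - x₀| ^ (N - 1) * ENNReal.ofReal (h x₀) ≤
        ENNReal.ofReal (h (t * x₁ + (1 - t) * x₀))

/-- The measure `h·𝓛¹` restricted to `[0,D]`. -/
noncomputable def mcMeasure (D : ℝ) (h : ℝ → ℝ) : Measure ℝ :=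
  (volume.restrict (Set.Icc 0 D)).withDensity fun x => ENNReal.ofReal (h x)

/-- The outer Minkowski content `μ⁺(E) = liminf_{ρ→0⁺} (μ(E^ρ) - μ(E))/ρ`. -/
noncomputable def minkContent (μ : Measure ℝ) (E : Set ℝ) : ℝ :=
  Filter.liminf (fun ρ : ℝ => ((μ (Metric.thickening ρ E)).toReal - (μ E).toReal) / ρ)
    (nhdsWithin 0 (Set.Ioi 0))

/-! On `[0, r]` with `r ≤ a` the density is `Vol(D) f(a) g(x) / g(a)`, where
`g(x) = s_κ(D - x)^(N-1)`, so the ratio factors as `(k_D f(a) / a^(N-1)) · ((1/r) ∫₀^r g) / g(a)`.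
Both factors tend to `1` as `(a, r) → 0` with `0 < r ≤ a`: the second by continuity of `g` at `0`,
the first because `1/f(a) = (∫₀^a g) / g(a) + (∫_a^D s_κ^(N-1)) / s_κ(a)^(N-1)` and `s_κ(a) ~ a`. -/

open scoped Topology

namespace ModelSpace

lemma sK_zero (κ : ℝ) : sK κ 0 = 0 := by
  simp [sK]

@[fun_prop]
lemma continuous_sK (κ : ℝ) : Continuous (sK κ) := by
  unfold sK
  split_ifs <;> fun_prop

lemma hasDerivAt_sK_zero (κ : ℝ) : HasDerivAt (sK κ) 1 0 := by
  unfold sK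
  split_ifs with hpos hzero
  · have hs : √κ ≠ 0 := (Real.sqrt_pos.2 hpos).ne'
    simpa [hs] using (((hasDerivAt_id (0:ℝ)).const_mul √κ).sin).div_const √κ
  · exact hasDerivAt_id 0
  · have hs : √(-κ) ≠ 0 :=
      (Real.sqrt_pos.2 (neg_pos.2 (lt_of_le_of_ne (not_lt.1 hpos) hzero))).ne'
    simpa [hs] using (((hasDerivAt_id (0:ℝ)).const_mul √(-κ)).sinh).div_const √(-κ)

lemma sK_pos {κ θ : ℝ} (hθ : 0 < θ) (hκθ : 0 < κ → √κ * θ < Real.pi) : 0 < sK κ θ := by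
  unfold sK
  split_ifs with hpos hzero
  · exact div_pos (Real.sin_pos_of_pos_of_lt_pi (by positivity) (hκθ hpos))
      (Real.sqrt_pos.2 hpos)
  · exact hθ
  · have hs : 0 < √(-κ) :=
      Real.sqrt_pos.2 (neg_pos.2 (lt_of_le_of_ne (not_lt.1 hpos) hzero))
    exact div_pos (Real.sinh_pos_iff.2 (by positivity)) hs

lemma tendsto_div_self_of_hasDerivAt {f : ℝ → ℝ} {f' : ℝ} (hf : HasDerivAt f f' 0)
    (h0 : f 0 = 0) : Tendsto (fun x => f x / x) (𝓝[≠] 0) (𝓝 f') := by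
  simpa [h0, div_eq_inv_mul] using hf.tendsto_slope_zero

lemma tendsto_integral_div_self {g : ℝ → ℝ} (hg : Continuous g) :
    Tendsto (fun r => (∫ x in 0..r, g x) / r) (𝓝[≠] 0) (𝓝 (g 0)) :=
  tendsto_div_self_of_hasDerivAt (hg.integral_hasStrictDerivAt 0 0).hasDerivAt
    intervalIntegral.integral_same

variable {κ N D a : ℝ}

lemma inv_fKND_eq (hpos : ∀ θ ∈ Ioc 0 D, 0 < sK κ θ) (ha : a ∈ Ioo 0 D) :
    (fKND κ N D a)⁻¹ =
      (∫ y in 0..a, sK κ (D - y) ^ (N - 1)) / sK κ (D - a) ^ (N - 1) +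
        (∫ y in a..D, sK κ y ^ (N - 1)) / sK κ a ^ (N - 1) := by
  rw [fKND, inv_inv, ← intervalIntegral.integral_div, ← intervalIntegral.integral_div]
  congr 1 <;> refine intervalIntegral.integral_congr fun y hy => Real.div_rpow ?_ ?_ _
  · rw [uIcc_of_le ha.1.le] at hy
    exact (hpos _ ⟨by linarith [hy.2, ha.2], by linarith [hy.1]⟩).le
  · exact (hpos _ ⟨by linarith [ha.2], by linarith [ha.1]⟩).le
  · rw [uIcc_of_le ha.2.le] at hy
    exact (hpos _ ⟨by linarith [hy.1, ha.1], hy.2⟩).le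
  · exact (hpos _ ⟨ha.1, ha.2.le⟩).le

lemma kD_pos (hN : 1 < N) (hD : 0 < D) (hpos : ∀ θ ∈ Ioc 0 D, 0 < sK κ θ) : 0 < kD κ N D :=
  intervalIntegral.intervalIntegral_pos_of_pos_on
    (Continuous.intervalIntegrable (by fun_prop (disch := linarith)) _ _)
    (fun θ hθ => Real.rpow_pos_of_pos (hpos θ ⟨hθ.1, hθ.2.le⟩) _) hD

lemma fKND_pos (hN : 1 < N) (hpos : ∀ θ ∈ Ioc 0 D, 0 < sK κ θ) (ha : a ∈ Ioo 0 D) :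
    0 < fKND κ N D a := by
  refine inv_pos.1 ?_
  rw [inv_fKND_eq hpos ha]
  refine add_pos_of_nonneg_of_pos ?_ ?_
  · refine div_nonneg (intervalIntegral.integral_nonneg ha.1.le fun y hy => ?_)
      (Real.rpow_nonneg (hpos _ ⟨by linarith [ha.2], by linarith [ha.1]⟩).le _)
    exact Real.rpow_nonneg (hpos _ ⟨by linarith [hy.2, ha.2], by linarith [hy.1]⟩).le _
  · refine div_pos ?_ (Real.rpow_pos_of_pos (hpos _ ⟨ha.1, ha.2.le⟩) _)
    exact intervalIntegral.intervalIntegral_pos_of_pos_on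
      (Continuous.intervalIntegrable (by fun_prop (disch := linarith)) _ _)
      (fun y hy => Real.rpow_pos_of_pos (hpos _ ⟨ha.1.trans hy.1, hy.2.le⟩) _) ha.2

lemma tendsto_rpow_mul_inv_fKND (hN : 1 < N) (hD : 0 < D)
    (hpos : ∀ θ ∈ Ioc 0 D, 0 < sK κ θ) :
    Tendsto (fun a => a ^ (N - 1) * (fKND κ N D a)⁻¹) (𝓝[>] 0) (𝓝 (kD κ N D)) := by
  have hg : Continuous fun y => sK κ (D - y) ^ (N - 1) := by fun_prop (disch := linarith)
  have hp : Continuous fun y => sK κ y ^ (N - 1) := by fun_prop (disch := linarith)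
  have hg0 : sK κ (D - 0) ^ (N - 1) ≠ 0 :=
    (Real.rpow_pos_of_pos (hpos _ ⟨by linarith, by linarith⟩) _).ne'
  have hpow : Tendsto (fun a : ℝ => a ^ (N - 1)) (𝓝[>] 0) (𝓝 0) := by
    simpa [Real.zero_rpow (by linarith : N - 1 ≠ 0)] using
      ((Real.continuousAt_rpow_const 0 (N - 1) (Or.inr (by linarith))).tendsto).mono_left
        nhdsWithin_le_nhds
  have hA : Tendsto (fun a => ∫ y in 0..a, sK κ (D - y) ^ (N - 1)) (𝓝[>] 0) (𝓝 0) := by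
    simpa using ((hg.integral_hasStrictDerivAt 0 0).hasDerivAt.continuousAt.tendsto).mono_left
      nhdsWithin_le_nhds
  have hB : Tendsto (fun a => ∫ y in a..D, sK κ y ^ (N - 1)) (𝓝[>] 0) (𝓝 (kD κ N D)) := by
    have h := ((hp.integral_hasStrictDerivAt D 0).hasDerivAt.continuousAt.tendsto).neg
    simp only [← intervalIntegral.integral_symm] at h
    exact h.mono_left nhdsWithin_le_nhds
  have hG : Tendsto (fun a => sK κ (D - a) ^ (N - 1)) (𝓝[>] 0) (𝓝 (sK κ (D - 0) ^ (N - 1))) :=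
    hg.continuousAt.tendsto.mono_left nhdsWithin_le_nhds
  have hratio : Tendsto (fun a => (a / sK κ a) ^ (N - 1)) (𝓝[>] 0) (𝓝 1) := by
    have hs := ((tendsto_div_self_of_hasDerivAt (hasDerivAt_sK_zero κ) (sK_zero κ)).mono_left
      (nhdsGT_le_nhdsNE 0)).inv₀ one_ne_zero
    simpa using hs.rpow_const (p := N - 1) (Or.inl (by norm_num))
  have hlim := ((hpow.mul hA).div hG hg0).add (hratio.mul hB)
  rw [mul_zero, zero_div, zero_add, one_mul] at hlim
  refine hlim.congr' ?_
  filter_upwards [Ioo_mem_nhdsGT hD] with a ha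
  rw [Pi.div_apply, inv_fKND_eq hpos ha, Real.div_rpow ha.1.le (hpos a ⟨ha.1, ha.2.le⟩).le]
  ring

lemma tendsto_kD_mul_fKND_div_rpow (hN : 1 < N) (hD : 0 < D)
    (hpos : ∀ θ ∈ Ioc 0 D, 0 < sK κ θ) :
    Tendsto (fun a => kD κ N D * fKND κ N D a / a ^ (N - 1)) (𝓝[>] 0) (𝓝 1) := by
  have hk := (kD_pos hN hD hpos).ne'
  have hlim := (tendsto_const_nhds (x := kD κ N D)).div
    (tendsto_rpow_mul_inv_fKND hN hD hpos) hk
  rw [div_self hk] at hlim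
  refine hlim.congr' ?_
  filter_upwards [Ioo_mem_nhdsGT hD] with a ha
  rw [Pi.div_apply, div_mul_eq_div_div, div_inv_eq_mul, div_mul_eq_mul_div]

lemma omegaN_pos {N : ℝ} (hN : 0 < N) : 0 < omegaN N :=
  div_pos (Real.rpow_pos_of_pos Real.pi_pos _) (Real.Gamma_pos_of_pos (by positivity))

lemma toReal_mcMeasure_Icc {r : ℝ} {h : ℝ → ℝ} (hr : 0 ≤ r) (hrD : r ≤ D)
    (hint : IntegrableOn h (Icc 0 r)) (hnn : ∀ x ∈ Icc 0 r, 0 ≤ h x) :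
    (mcMeasure D h (Icc 0 r)).toReal = ∫ x in 0..r, h x := by
  have hnn' : 0 ≤ᵐ[volume.restrict (Icc 0 r)] h := (ae_restrict_iff' measurableSet_Icc).2
    (Eventually.of_forall hnn)
  rw [mcMeasure, withDensity_apply _ measurableSet_Icc,
    Measure.restrict_restrict measurableSet_Icc, inter_eq_left.2 (Icc_subset_Icc_right hrD),
    ← ofReal_integral_eq_lintegral_ofReal hint hnn',
    ENNReal.toReal_ofReal (integral_nonneg_of_ae hnn'), intervalIntegral.integral_of_le hr,
    integral_Icc_eq_integral_Ioc]

lemma toReal_mcMeasure_model_Icc (hN : 1 < N) (hD : 0 < D) (hpos : ∀ θ ∈ Ioc 0 D, 0 < sK κ θ)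
    {r : ℝ} (ha : a ∈ Ioo 0 D) (hr : r ∈ Ioc 0 a) :
    (mcMeasure D (fun x => VolKN κ N D * hKND κ N D a x) (Icc 0 r)).toReal =
      VolKN κ N D * fKND κ N D a * (∫ x in 0..r, sK κ (D - x) ^ (N - 1)) /
        sK κ (D - a) ^ (N - 1) := by
  have hg : Continuous fun y => sK κ (D - y) ^ (N - 1) := by fun_prop (disch := linarith)
  have hsa := hpos (D - a) ⟨by linarith [ha.2], by linarith [ha.1]⟩
  have hc : 0 ≤ VolKN κ N D * fKND κ N D a / sK κ (D - a) ^ (N - 1) :=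
    div_nonneg (mul_pos (mul_pos (mul_pos (by linarith) (omegaN_pos (by linarith)))
      (kD_pos hN hD hpos)) (fKND_pos hN hpos ha)).le (Real.rpow_nonneg hsa.le _)
  have heq : EqOn (fun x => VolKN κ N D * hKND κ N D a x)
      (fun x => VolKN κ N D * fKND κ N D a / sK κ (D - a) ^ (N - 1) *
        sK κ (D - x) ^ (N - 1)) (Icc 0 r) := fun x hx => by
    have hsx := hpos (D - x) ⟨by linarith [hx.2, hr.2, ha.2], by linarith [hx.1]⟩
    simp only [hKND, if_pos (hx.2.trans hr.2), Real.div_rpow hsx.le hsa.le]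
    ring
  have hnn : ∀ x ∈ Icc 0 r, 0 ≤ VolKN κ N D * hKND κ N D a x := fun x hx => by
    have hx' : VolKN κ N D * hKND κ N D a x = _ := heq hx
    rw [hx']
    exact mul_nonneg hc (Real.rpow_nonneg
      (hpos (D - x) ⟨by linarith [hx.2, hr.2, ha.2], by linarith [hx.1]⟩).le _)
  rw [toReal_mcMeasure_Icc hr.1.le (by linarith [hr.2, ha.2])
      ((by fun_prop : Continuous _).integrableOn_Icc.congr_fun heq.symm measurableSet_Icc) hnn,
    intervalIntegral.integral_congr (heq.mono (uIcc_of_le hr.1.le).subset),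
    intervalIntegral.integral_const_mul]
  ring

lemma tendsto_mcMeasure_model_Icc_div (hN : 1 < N) (hD : 0 < D)
    (hpos : ∀ θ ∈ Ioc 0 D, 0 < sK κ θ) :
    Tendsto (fun p : ℝ × ℝ =>
        (mcMeasure D (fun x => VolKN κ N D * hKND κ N D p.1 x) (Icc 0 p.2)).toReal /
          (N * omegaN N * p.1 ^ (N - 1) * p.2))
      (𝓝[{p | 0 < p.2 ∧ p.2 ≤ p.1}] 0) (𝓝 1) := by
  have hfst : Tendsto Prod.fst (𝓝[{p : ℝ × ℝ | 0 < p.2 ∧ p.2 ≤ p.1}] 0) (𝓝[>] 0) :=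
    tendsto_nhdsWithin_iff.2 ⟨continuous_fst.continuousWithinAt.tendsto,
      eventually_nhdsWithin_of_forall fun p hp => hp.1.trans_le hp.2⟩
  have hsnd : Tendsto Prod.snd (𝓝[{p : ℝ × ℝ | 0 < p.2 ∧ p.2 ≤ p.1}] 0) (𝓝[≠] 0) :=
    tendsto_nhdsWithin_iff.2 ⟨continuous_snd.continuousWithinAt.tendsto,
      eventually_nhdsWithin_of_forall fun p hp => hp.1.ne'⟩
  have hg : Continuous fun y => sK κ (D - y) ^ (N - 1) := by fun_prop (disch := linarith)
  have hg0 : sK κ (D - 0) ^ (N - 1) ≠ 0 :=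
    (Real.rpow_pos_of_pos (hpos _ ⟨by linarith, by linarith⟩) _).ne'
  have hlim := ((tendsto_kD_mul_fKND_div_rpow hN hD hpos).comp hfst).mul
    (((tendsto_integral_div_self hg).comp hsnd).div
      ((hg.tendsto 0).comp (hfst.mono_right nhdsWithin_le_nhds)) hg0)
  rw [div_self hg0, mul_one] at hlim
  refine hlim.congr' ?_
  filter_upwards [self_mem_nhdsWithin, hfst.eventually (Ioo_mem_nhdsGT hD)] with p hp ha
  have hN0 : N ≠ 0 := by linarith
  have hω : omegaN N ≠ 0 := (omegaN_pos (by linarith)).ne'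
  have hga := (Real.rpow_pos_of_pos (hpos (D - p.1) ⟨by linarith [ha.2], by linarith [ha.1]⟩)
    (N - 1)).ne'
  have hpow := (Real.rpow_pos_of_pos ha.1 (N - 1)).ne'
  rw [toReal_mcMeasure_model_Icc hN hD hpos ha hp]
  simp only [Function.comp_apply, Pi.div_apply, VolKN, kD]
  field_simp

end ModelSpace

open ModelSpace in
/-- for `m_a = Vol_{K,N}(D)·h^a_{K,N,D}·𝓛¹` on `[0,D]`, one has
`m_a([0,r]) = N ω_N a^(N-1) r (1+o(1))` for `0 < r ≤ a`, `a` small. -/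
theorem stmt10 (N κ D : ℝ) (hN : 1 < N) (hκ : κ = -1 ∨ κ = 0 ∨ κ = 1)
    (hD : 0 < D) (hDpi : κ = 1 → D < Real.pi) :
    ∀ ε > 0, ∃ abar > 0, ∀ a ∈ Set.Ioo (0:ℝ) abar, ∀ r ∈ Set.Ioc (0:ℝ) a,
      |(mcMeasure D (fun x => VolKN κ N D * hKND κ N D a x) (Set.Icc 0 r)).toReal /
        (N * omegaN N * a ^ (N - 1) * r) - 1| ≤ ε := by
  have hpos : ∀ θ ∈ Ioc 0 D, 0 < sK κ θ := fun θ hθ => sK_pos hθ.1 fun hκpos => by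
    rcases hκ with rfl | rfl | rfl
    · linarith
    · linarith
    · simpa using hθ.2.trans_lt (hDpi rfl)
  intro ε hε
  obtain ⟨δ, hδ, hclose⟩ :=
    Metric.tendsto_nhdsWithin_nhds.1 (tendsto_mcMeasure_model_Icc_div hN hD hpos) ε hε
  refine ⟨δ, hδ, fun a ha r hr => (hclose (x := (a, r)) hr ?_).le⟩
  rw [Prod.dist_eq, max_lt_iff, Prod.fst_zero, Prod.snd_zero, Real.dist_0_eq_abs,
    Real.dist_0_eq_abs, abs_of_pos ha.1, abs_of_pos hr.1]
  exact ⟨ha.2, hr.2.trans_lt ha.2⟩
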